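/- Let μ be a Borel probability measure on a separable Banach space X and let G_K : X → ℝ^d satisfy Assumption A(L₁, L₂, x₀, R, L₃). Let X₁,…,X_M be i.i.d. with law μ and let π_M^K(y) = (1/M)∑_{m=1}^M (2π)^{-d/2} det(Γ)^{-1/2} exp(-½‖G_K(X_m)-y‖_Γ²) be the Gaussian mixture evidence surrogate. Then there is a finite constant C, depending only on L₁, L₂, L₃, R, x₀, d, Γ and μ and independent of M, such that E^{⊗μ}[ ∫_{ℝ^d} π_M^K(y) log²π_M^K(y) dy ] ≤ C, where E^{⊗μ} denotes expectation over the i.i.d. sample X₁,…,X_M. -/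

import Mathlib

/-!
Since every Gaussian component is bounded by `c = (2π)^{-d/2} det(Γ)^{-1/2}`, so is `π_M`, and on
`[0, c]` one has `t log² t ≤ 16 √t + (log c)² t`. After exchanging the expectation with the
`dy`-integral it therefore suffices to bound `E π_M(y)` and `E √π_M(y) ≤ (E π_M(y))^{1/2}`
(Jensen) by integrable functions of `y`. For i.i.d. nodes `E π_M(y)` is the evidence
`π(y) = ∫ π(y | x) μ(dx)`, whatever `M` is. The Lipschitz bound and the bound on the ball give
`‖G(x)‖_Γ ≤ L₁ ‖x‖ + b`, and the triangle inequality for `‖·‖_Γ` then yields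
`exp(-½‖G(x) - y‖²_Γ) ≤ exp(θ b²) exp(L₂ ‖x‖²) exp(-θ ‖y‖²_Γ / 4)` with `θ = min 1 (L₂ / L₁²)`.
Integrating in `x` against `μ` shows that `π(y)` has Gaussian decay in `y`.
-/

open MeasureTheory Real Matrix

/-- `‖z‖_Γ² = zᵀ Γ⁻¹ z` for `z ∈ ℝ^d`. -/
noncomputable def normGammaSq {d : ℕ} (Γ : Matrix (Fin d) (Fin d) ℝ) (z : Fin d → ℝ) : ℝ :=
  z ⬝ᵥ (Γ⁻¹ *ᵥ z)

/-- `‖z‖_Γ = sqrt(zᵀ Γ⁻¹ z)`. -/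
noncomputable def normGamma {d : ℕ} (Γ : Matrix (Fin d) (Fin d) ℝ) (z : Fin d → ℝ) : ℝ :=
  Real.sqrt (normGammaSq Γ z)

/-- Gaussian likelihood density
`π(y|x) = (2π)^{-d/2} det(Γ)^{-1/2} exp(-½‖G(x)-y‖_Γ²)`. -/
noncomputable def gaussLikelihood {d : ℕ} (Γ : Matrix (Fin d) (Fin d) ℝ) {X : Type*}
    (G : X → (Fin d → ℝ)) (x : X) (y : Fin d → ℝ) : ℝ :=
  (Real.sqrt ((2 * Real.pi) ^ d * Γ.det))⁻¹ *
    Real.exp (-(1 / 2) * normGammaSq Γ (G x - y))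

/-- Gaussian mixture evidence surrogate built on nodes `xs : Fin M → X`:
`π_M(y) = (1/M) ∑ₘ (2π)^{-d/2} det(Γ)^{-1/2} exp(-½‖G(xsₘ)-y‖_Γ²)`. -/
noncomputable def gmmSurrogate {d M : ℕ} (Γ : Matrix (Fin d) (Fin d) ℝ) {X : Type*}
    (G : X → (Fin d → ℝ)) (xs : Fin M → X) (y : Fin d → ℝ) : ℝ :=
  (1 / (M : ℝ)) * ∑ m, gaussLikelihood Γ G (xs m) y

open scoped ENNReal

theorem mul_log_sq_le {t c : ℝ} (ht : 0 ≤ t) (htc : t ≤ c) :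
    t * log t ^ 2 ≤ 16 * √t + log c ^ 2 * t := by
  rcases ht.eq_or_lt with rfl | htpos
  · simp
  rcases le_or_gt t 1 with ht1 | ht1
  · have hbound : |log t * t ^ (1 / 4 : ℝ)| < 4 := by
      simpa using abs_log_mul_self_rpow_lt t (1 / 4) htpos ht1 (by norm_num)
    have hsq : (log t * t ^ (1 / 4 : ℝ)) ^ 2 ≤ 16 := by
      rw [← sq_abs]; nlinarith [abs_nonneg (log t * t ^ (1 / 4 : ℝ))]
    have hroot : (t ^ (1 / 4 : ℝ)) ^ 2 = √t := by
      rw [← Real.rpow_natCast, ← Real.rpow_mul ht, Real.sqrt_eq_rpow]; norm_num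
    have ht_eq : t * log t ^ 2 = √t * (log t * t ^ (1 / 4 : ℝ)) ^ 2 := by
      rw [mul_pow, hroot]
      nth_rewrite 1 [← Real.mul_self_sqrt ht]
      ring
    rw [ht_eq]
    linarith [mul_le_mul_of_nonneg_left hsq (Real.sqrt_nonneg t),
      mul_nonneg (sq_nonneg (log c)) ht]
  · have hlog : log t ^ 2 ≤ log c ^ 2 :=
      pow_le_pow_left₀ (log_pos ht1).le (log_le_log htpos htc) 2
    linarith [mul_le_mul_of_nonneg_left hlog ht, Real.sqrt_nonneg t]

theorem neg_half_sq_le_of_le_add {s q g a b θ : ℝ} (hs : 0 ≤ s) (hg : 0 ≤ g)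
    (hsg : s ≤ g + q) (hga : g ≤ a + b) (hθ0 : 0 ≤ θ) (hθ1 : θ ≤ 1) :
    -(1 / 2) * q ^ 2 ≤ -(θ / 4) * s ^ 2 + θ * a ^ 2 + θ * b ^ 2 := by
  have hs2 : s ^ 2 ≤ 2 * g ^ 2 + 2 * q ^ 2 := by nlinarith [sq_nonneg (g - q)]
  have hg2 : g ^ 2 ≤ 2 * a ^ 2 + 2 * b ^ 2 := by nlinarith [sq_nonneg (a - b)]
  nlinarith [mul_le_mul_of_nonneg_left
      (by linarith : s ^ 2 ≤ 4 * a ^ 2 + 4 * b ^ 2 + 2 * q ^ 2) hθ0,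
    mul_le_mul_of_nonneg_right hθ1 (sq_nonneg q)]

theorem lintegral_rpow_le_rpow_lintegral {Ω : Type*} [MeasurableSpace Ω] {ν : Measure Ω}
    [IsProbabilityMeasure ν] {f : Ω → ℝ≥0∞} (hf : AEMeasurable f ν) {p : ℝ} (hp0 : 0 ≤ p)
    (hp1 : p ≤ 1) : ∫⁻ ω, f ω ^ p ∂ν ≤ (∫⁻ ω, f ω ∂ν) ^ p := by
  simpa using ENNReal.lintegral_mul_norm_pow_le hf (aemeasurable_const (b := 1)) hp0
    (sub_nonneg.2 hp1) (add_sub_cancel p 1)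

theorem lintegral_pi_sum_comp_eval {ι X : Type*} [Fintype ι] [MeasurableSpace X] (μ : Measure X)
    [IsProbabilityMeasure μ] {f : X → ℝ≥0∞} (hf : Measurable f) :
    ∫⁻ xs, ∑ i, f (xs i) ∂(Measure.pi fun _ : ι => μ) = Fintype.card ι * ∫⁻ x, f x ∂μ := by
  rw [lintegral_finsetSum _ fun i _ => by fun_prop]
  simp_rw [(measurePreserving_eval (fun _ : ι => μ) _).lintegral_comp hf]
  simp

theorem integral_integral_le_toReal_of_lintegral_le {Ω E : Type*} [MeasurableSpace Ω]
    [MeasurableSpace E] {ν : Measure Ω} {ρ : Measure E} {f : Ω → E → ℝ} {B : ℝ≥0∞} (hB : B ≠ ∞)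
    (h : ∫⁻ ω, ∫⁻ y, ‖f ω y‖ₑ ∂ρ ∂ν ≤ B) : ∫ ω, ∫ y, f ω y ∂ρ ∂ν ≤ B.toReal :=
  calc ∫ ω, ∫ y, f ω y ∂ρ ∂ν ≤ ‖∫ ω, ∫ y, f ω y ∂ρ ∂ν‖ₑ.toReal := by
        rw [toReal_enorm]; exact Real.le_norm_self _
    _ ≤ B.toReal := ENNReal.toReal_mono hB <| (enorm_integral_le_lintegral_enorm _).trans <|
        (lintegral_mono fun ω => enorm_integral_le_lintegral_enorm _).trans h

theorem lintegral_lintegral_enorm_mul_log_sq_le {Ω E : Type*} [MeasurableSpace Ω]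
    [MeasurableSpace E] {ν : Measure Ω} [IsProbabilityMeasure ν] {ρ : Measure E} [SFinite ρ]
    {f : Ω → E → ℝ} (hf : Measurable (Function.uncurry f)) (hf0 : ∀ ω y, 0 ≤ f ω y) {c : ℝ}
    (hfc : ∀ ω y, f ω y ≤ c) :
    ∫⁻ ω, ∫⁻ y, ‖f ω y * log (f ω y) ^ 2‖ₑ ∂ρ ∂ν ≤
      ∫⁻ y, (16 * (∫⁻ ω, ENNReal.ofReal (f ω y) ∂ν) ^ (1 / 2 : ℝ) +
        ENNReal.ofReal (log c ^ 2) * ∫⁻ ω, ENNReal.ofReal (f ω y) ∂ν) ∂ρ := by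
  have hpt : ∀ ω y, ‖f ω y * log (f ω y) ^ 2‖ₑ ≤ 16 * ENNReal.ofReal (f ω y) ^ (1 / 2 : ℝ) +
      ENNReal.ofReal (log c ^ 2) * ENNReal.ofReal (f ω y) := by
    intro ω y
    have h0 := hf0 ω y
    rw [enorm_eq_ofReal (by positivity), ENNReal.ofReal_rpow_of_nonneg h0 (by norm_num),
      ← Real.sqrt_eq_rpow, ← ENNReal.ofReal_ofNat, ← ENNReal.ofReal_mul (by norm_num),
      ← ENNReal.ofReal_mul (sq_nonneg _), ← ENNReal.ofReal_add (by positivity) (by positivity)]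
    exact ENNReal.ofReal_le_ofReal (mul_log_sq_le h0 (hfc ω y))
  have hmeas : ∀ y, Measurable fun ω => ENNReal.ofReal (f ω y) := fun y =>
    (hf.comp (measurable_id.prodMk measurable_const)).ennreal_ofReal
  calc ∫⁻ ω, ∫⁻ y, ‖f ω y * log (f ω y) ^ 2‖ₑ ∂ρ ∂ν
      ≤ ∫⁻ ω, ∫⁻ y, (16 * ENNReal.ofReal (f ω y) ^ (1 / 2 : ℝ) +
          ENNReal.ofReal (log c ^ 2) * ENNReal.ofReal (f ω y)) ∂ρ ∂ν :=
        lintegral_mono fun ω => lintegral_mono fun y => hpt ω y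
    _ = ∫⁻ y, ∫⁻ ω, (16 * ENNReal.ofReal (f ω y) ^ (1 / 2 : ℝ) +
          ENNReal.ofReal (log c ^ 2) * ENNReal.ofReal (f ω y)) ∂ν ∂ρ :=
        lintegral_lintegral_swap (by fun_prop)
    _ ≤ _ := lintegral_mono fun y => by
        rw [lintegral_add_left (by fun_prop), lintegral_const_mul' _ _ (by finiteness),
          lintegral_const_mul' _ _ (by finiteness)]
        gcongr
        exact lintegral_rpow_le_rpow_lintegral (hmeas y).aemeasurable (by norm_num) (by norm_num)

theorem integrable_exp_neg_mul_sum_sq {ι : Type*} [Fintype ι] {γ : ℝ} (hγ : 0 < γ) :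
    Integrable (fun w : ι → ℝ => exp (-γ * ∑ i, w i ^ 2)) := by
  simp_rw [Finset.mul_sum, Real.exp_sum]
  exact Integrable.fintype_prod (f := fun _ t => exp (-γ * t ^ 2)) fun _ =>
    integrable_exp_neg_mul_sq hγ

section GammaNorm

variable {d : ℕ} {Γ : Matrix (Fin d) (Fin d) ℝ}

theorem Matrix.PosDef.exists_isUnit_normGammaSq_eq_sum_sq (hΓ : Γ.PosDef) :
    ∃ B : Matrix (Fin d) (Fin d) ℝ, IsUnit B ∧ ∀ z, normGammaSq Γ z = ∑ i, (B *ᵥ z) i ^ 2 := by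
  open scoped MatrixOrder in
  obtain ⟨B, hB, hBB⟩ :=
    CStarAlgebra.isStrictlyPositive_iff_eq_star_mul_self.mp hΓ.inv.isStrictlyPositive
  refine ⟨B, hB, fun z => ?_⟩
  rw [normGammaSq, hBB, ← mulVec_mulVec, dotProduct_mulVec, star_eq_conjTranspose,
    conjTranspose_eq_transpose_of_trivial, vecMul_transpose, dotProduct]
  simp only [sq]

theorem continuous_normGammaSq (Γ : Matrix (Fin d) (Fin d) ℝ) : Continuous (normGammaSq Γ) := by
  unfold normGammaSq; fun_prop

theorem normGammaSq_nonneg (hΓ : Γ.PosDef) (z : Fin d → ℝ) : 0 ≤ normGammaSq Γ z := by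
  obtain ⟨B, -, hB⟩ := hΓ.exists_isUnit_normGammaSq_eq_sum_sq
  rw [hB]
  positivity

theorem normGamma_nonneg (Γ : Matrix (Fin d) (Fin d) ℝ) (z : Fin d → ℝ) : 0 ≤ normGamma Γ z :=
  Real.sqrt_nonneg _

theorem sq_normGamma (hΓ : Γ.PosDef) (z : Fin d → ℝ) : normGamma Γ z ^ 2 = normGammaSq Γ z :=
  Real.sq_sqrt (normGammaSq_nonneg hΓ z)

theorem normGamma_neg (Γ : Matrix (Fin d) (Fin d) ℝ) (z : Fin d → ℝ) :
    normGamma Γ (-z) = normGamma Γ z := by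
  simp [normGamma, normGammaSq, mulVec_neg]

theorem normGamma_add_le (hΓ : Γ.PosDef) (z w : Fin d → ℝ) :
    normGamma Γ (z + w) ≤ normGamma Γ z + normGamma Γ w := by
  obtain ⟨B, -, hB⟩ := hΓ.exists_isUnit_normGammaSq_eq_sum_sq
  have hnorm : ∀ v, normGamma Γ v = ‖WithLp.toLp 2 (B *ᵥ v)‖ := fun v => by
    simp [normGamma, hB, EuclideanSpace.norm_eq]
  simpa only [hnorm, mulVec_add, WithLp.toLp_add] using norm_add_le _ _

theorem lintegral_exp_neg_mul_normGammaSq_lt_top (hΓ : Γ.PosDef) {γ : ℝ} (hγ : 0 < γ) :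
    ∫⁻ y, ENNReal.ofReal (exp (-γ * normGammaSq Γ y)) < ∞ := by
  obtain ⟨B, hB, hBsq⟩ := hΓ.exists_isUnit_normGammaSq_eq_sum_sq
  set g : (Fin d → ℝ) → ℝ≥0∞ := fun w => ENNReal.ofReal (exp (-γ * ∑ i, w i ^ 2))
  have hdet : LinearMap.det (toLin' B) ≠ 0 := by
    rw [LinearMap.det_toLin']; exact ((isUnit_iff_isUnit_det B).mp hB).ne_zero
  have hg : Measurable g := by fun_prop
  calc ∫⁻ y, ENNReal.ofReal (exp (-γ * normGammaSq Γ y))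
      = ∫⁻ y, g (toLin' B y) := by simp only [hBsq, toLin'_apply, g]
    _ = ∫⁻ w, g w ∂(volume.map (toLin' B)) :=
        (lintegral_map hg (toLin' B).continuous_of_finiteDimensional.measurable).symm
    _ = ENNReal.ofReal |(LinearMap.det (toLin' B))⁻¹| * ∫⁻ w, g w := by
        rw [Measure.map_linearMap_addHaar_eq_smul_addHaar _ hdet, lintegral_smul_measure,
          smul_eq_mul]
    _ < ∞ := ENNReal.mul_lt_top ENNReal.ofReal_lt_top
        (integrable_exp_neg_mul_sum_sq hγ).lintegral_lt_top

theorem lintegral_rpow_half_add_exp_neg_normGammaSq_lt_top (hΓ : Γ.PosDef) {γ : ℝ}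
    (hγ : 0 < γ) (A : ℝ) {K₁ K₂ : ℝ≥0∞} (hK₁ : K₁ ≠ ∞) (hK₂ : K₂ ≠ ∞) :
    ∫⁻ y, (K₁ * ENNReal.ofReal (A * exp (-γ * normGammaSq Γ y)) ^ (1 / 2 : ℝ) +
      K₂ * ENNReal.ofReal (A * exp (-γ * normGammaSq Γ y))) < ∞ := by
  have hroot : ∀ y, ENNReal.ofReal (exp (-γ * normGammaSq Γ y)) ^ (1 / 2 : ℝ) =
      ENNReal.ofReal (exp (-(γ / 2) * normGammaSq Γ y)) := fun y => by
    rw [ENNReal.ofReal_rpow_of_nonneg (exp_nonneg _) (by norm_num), ← exp_mul]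
    ring_nf
  have := (continuous_normGammaSq Γ).measurable
  simp_rw [ENNReal.ofReal_mul' (exp_nonneg _), ENNReal.mul_rpow_of_nonneg _ _
    (by norm_num : (0 : ℝ) ≤ 1 / 2), hroot, ← mul_assoc]
  rw [lintegral_add_left (by fun_prop), lintegral_const_mul' _ _ (by finiteness),
    lintegral_const_mul' _ _ (by finiteness)]
  exact ENNReal.add_lt_top.2 ⟨ENNReal.mul_lt_top (by finiteness)
    (lintegral_exp_neg_mul_normGammaSq_lt_top hΓ (by positivity)),
    ENNReal.mul_lt_top (by finiteness) (lintegral_exp_neg_mul_normGammaSq_lt_top hΓ hγ)⟩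

end GammaNorm

section Surrogate

variable {d : ℕ} {Γ : Matrix (Fin d) (Fin d) ℝ} {X : Type*}

noncomputable def gaussNormConst (Γ : Matrix (Fin d) (Fin d) ℝ) : ℝ :=
  (√((2 * π) ^ d * Γ.det))⁻¹

noncomputable def gaussEvidence [MeasurableSpace X] (Γ : Matrix (Fin d) (Fin d) ℝ)
    (G : X → (Fin d → ℝ)) (μ : Measure X) (y : Fin d → ℝ) : ℝ≥0∞ :=
  ∫⁻ x, ENNReal.ofReal (gaussLikelihood Γ G x y) ∂μ

theorem gaussLikelihood_eq (G : X → (Fin d → ℝ)) (x : X) (y : Fin d → ℝ) :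
    gaussLikelihood Γ G x y = gaussNormConst Γ * exp (-(1 / 2) * normGammaSq Γ (G x - y)) :=
  rfl

theorem gaussNormConst_nonneg : 0 ≤ gaussNormConst Γ := by
  unfold gaussNormConst; positivity

theorem gaussLikelihood_nonneg (G : X → (Fin d → ℝ)) (x : X) (y : Fin d → ℝ) :
    0 ≤ gaussLikelihood Γ G x y := by
  rw [gaussLikelihood_eq]; exact mul_nonneg gaussNormConst_nonneg (exp_nonneg _)

theorem gaussLikelihood_le (hΓ : Γ.PosDef) (G : X → (Fin d → ℝ)) (x : X) (y : Fin d → ℝ) :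
    gaussLikelihood Γ G x y ≤ gaussNormConst Γ := by
  rw [gaussLikelihood_eq]
  refine mul_le_of_le_one_right gaussNormConst_nonneg (exp_le_one_iff.mpr ?_)
  nlinarith [normGammaSq_nonneg hΓ (G x - y)]

theorem gmmSurrogate_nonneg {M : ℕ} (G : X → (Fin d → ℝ)) (xs : Fin M → X) (y : Fin d → ℝ) :
    0 ≤ gmmSurrogate Γ G xs y :=
  mul_nonneg (by positivity) (Finset.sum_nonneg fun m _ => gaussLikelihood_nonneg G (xs m) y)

theorem gmmSurrogate_le (hΓ : Γ.PosDef) {M : ℕ} (G : X → (Fin d → ℝ)) (xs : Fin M → X)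
    (y : Fin d → ℝ) : gmmSurrogate Γ G xs y ≤ gaussNormConst Γ := by
  rcases M.eq_zero_or_pos with rfl | hM
  · simp [gmmSurrogate, gaussNormConst_nonneg]
  calc gmmSurrogate Γ G xs y ≤ 1 / (M : ℝ) * ∑ _m : Fin M, gaussNormConst Γ :=
        mul_le_mul_of_nonneg_left (Finset.sum_le_sum fun m _ => gaussLikelihood_le hΓ G _ y)
          (by positivity)
    _ = gaussNormConst Γ := by simp [field]

theorem measurable_gaussLikelihood [MeasurableSpace X] {G : X → (Fin d → ℝ)}
    (hG : Measurable G) : Measurable (Function.uncurry (gaussLikelihood Γ G)) := by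
  have := (continuous_normGammaSq Γ).measurable
  unfold gaussLikelihood
  fun_prop

theorem measurable_gmmSurrogate [MeasurableSpace X] {M : ℕ} {G : X → (Fin d → ℝ)}
    (hG : Measurable G) : Measurable (Function.uncurry (gmmSurrogate (M := M) Γ G)) := by
  have := measurable_gaussLikelihood (Γ := Γ) hG
  unfold gmmSurrogate
  fun_prop

theorem lintegral_gmmSurrogate_pi [MeasurableSpace X] (μ : Measure X) [IsProbabilityMeasure μ]
    {M : ℕ} (hM : M ≠ 0) {G : X → (Fin d → ℝ)} (hG : Measurable G) (y : Fin d → ℝ) :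
    ∫⁻ xs, ENNReal.ofReal (gmmSurrogate Γ G xs y) ∂(Measure.pi fun _ : Fin M => μ) =
      gaussEvidence Γ G μ y := by
  have hmeas : Measurable fun x => ENNReal.ofReal (gaussLikelihood Γ G x y) :=
    ((measurable_gaussLikelihood hG).comp (measurable_id.prodMk measurable_const)).ennreal_ofReal
  simp_rw [gmmSurrogate, ENNReal.ofReal_mul (by positivity : (0 : ℝ) ≤ 1 / (M : ℝ)),
    ENNReal.ofReal_sum_of_nonneg fun m _ => gaussLikelihood_nonneg G _ y]
  rw [lintegral_const_mul' _ _ ENNReal.ofReal_ne_top, lintegral_pi_sum_comp_eval μ hmeas,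
    Fintype.card_fin, ← mul_assoc, one_div, ENNReal.ofReal_inv_of_pos (by positivity),
    ENNReal.ofReal_natCast, ENNReal.inv_mul_cancel (by exact_mod_cast hM) (by simp), one_mul,
    gaussEvidence]

theorem normGamma_le_mul_norm_add_of_lipschitz [SeminormedAddCommGroup X] (hΓ : Γ.PosDef)
    {G : X → (Fin d → ℝ)} {L₁ L₃ : ℝ} {x₀ : X} (hL₁ : 0 ≤ L₁)
    (hG : ∀ x x', normGamma Γ (G x - G x') ≤ L₁ * ‖x - x'‖) (hx₀ : normGamma Γ (G x₀) ≤ L₃)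
    (x : X) : normGamma Γ (G x) ≤ L₁ * ‖x‖ + (L₃ + L₁ * ‖x₀‖) := by
  have := normGamma_add_le hΓ (G x - G x₀) (G x₀)
  rw [sub_add_cancel] at this
  linarith [hG x x₀, mul_le_mul_of_nonneg_left (norm_sub_le x x₀) hL₁]

theorem gaussLikelihood_le_mul_exp [Norm X] (hΓ : Γ.PosDef) {G : X → (Fin d → ℝ)}
    {L₁ L₂ b θ : ℝ} (hG : ∀ x, normGamma Γ (G x) ≤ L₁ * ‖x‖ + b) (hθ0 : 0 ≤ θ) (hθ1 : θ ≤ 1)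
    (hθL : θ * L₁ ^ 2 ≤ L₂) (x : X) (y : Fin d → ℝ) :
    gaussLikelihood Γ G x y ≤
      gaussNormConst Γ * exp (θ * b ^ 2) * exp (-(θ / 4) * normGammaSq Γ y) *
        exp (L₂ * ‖x‖ ^ 2) := by
  have htri : normGamma Γ y ≤ normGamma Γ (G x) + normGamma Γ (G x - y) := by
    have := normGamma_add_le hΓ (G x) (y - G x)
    rwa [add_sub_cancel, ← normGamma_neg Γ (y - G x), neg_sub] at this
  have hexp := neg_half_sq_le_of_le_add (normGamma_nonneg Γ y) (normGamma_nonneg Γ _) htri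
    (hG x) hθ0 hθ1
  rw [sq_normGamma hΓ, sq_normGamma hΓ, mul_pow] at hexp
  have hL : θ * (L₁ ^ 2 * ‖x‖ ^ 2) ≤ L₂ * ‖x‖ ^ 2 := by
    rw [← mul_assoc]; exact mul_le_mul_of_nonneg_right hθL (sq_nonneg _)
  rw [gaussLikelihood_eq, mul_assoc, mul_assoc, ← exp_add, ← exp_add]
  refine mul_le_mul_of_nonneg_left (exp_le_exp.2 ?_) gaussNormConst_nonneg
  linarith

theorem gaussEvidence_le_mul_exp [MeasurableSpace X] [Norm X] (hΓ : Γ.PosDef)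
    {μ : Measure X} {G : X → (Fin d → ℝ)} {L₁ L₂ b θ : ℝ}
    (hμ : Integrable (fun x => exp (L₂ * ‖x‖ ^ 2)) μ)
    (hG : ∀ x, normGamma Γ (G x) ≤ L₁ * ‖x‖ + b) (hθ0 : 0 ≤ θ) (hθ1 : θ ≤ 1)
    (hθL : θ * L₁ ^ 2 ≤ L₂) (y : Fin d → ℝ) :
    gaussEvidence Γ G μ y ≤ ENNReal.ofReal (gaussNormConst Γ * exp (θ * b ^ 2) *
      exp (-(θ / 4) * normGammaSq Γ y) * ∫ x, exp (L₂ * ‖x‖ ^ 2) ∂μ) := by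
  have hk : 0 ≤ gaussNormConst Γ * exp (θ * b ^ 2) * exp (-(θ / 4) * normGammaSq Γ y) := by
    have := gaussNormConst_nonneg (Γ := Γ); positivity
  calc gaussEvidence Γ G μ y
      ≤ ∫⁻ x, ENNReal.ofReal (gaussNormConst Γ * exp (θ * b ^ 2) *
          exp (-(θ / 4) * normGammaSq Γ y) * exp (L₂ * ‖x‖ ^ 2)) ∂μ :=
        lintegral_mono fun x => ENNReal.ofReal_le_ofReal
          (gaussLikelihood_le_mul_exp hΓ hG hθ0 hθ1 hθL x y)
    _ = _ := by
        simp_rw [ENNReal.ofReal_mul hk]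
        rw [lintegral_const_mul' _ _ ENNReal.ofReal_ne_top,
          ← ofReal_integral_eq_lintegral_ofReal hμ (.of_forall fun x => (exp_pos _).le)]

end Surrogate

theorem gmm_surrogate_squared_log_moment_uniform_bound_general {d : ℕ}
    {X : Type*} [NormedAddCommGroup X] [MeasurableSpace X]
    (μ : Measure X) [IsProbabilityMeasure μ]
    (Γ : Matrix (Fin d) (Fin d) ℝ) (hΓ_pd : Γ.PosDef)
    (L₁ L₂ R L₃ : ℝ) (x₀ : X)
    (hL₁ : 0 < L₁) (hL₂ : 0 < L₂) (hR : 0 < R)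
    (hSubGauss : Integrable (fun x => Real.exp (L₂ * ‖x‖ ^ 2)) μ) :
    ∃ C : ℝ, ∀ GK : X → (Fin d → ℝ),
      Measurable GK →
      (∀ x x' : X, normGamma Γ (GK x - GK x') ≤ L₁ * ‖x - x'‖) →
      (∀ x ∈ Metric.ball x₀ R, normGamma Γ (GK x) < L₃) →
      ∀ M : ℕ, 0 < M →
        ∫ xs, (∫ y, gmmSurrogate Γ GK xs y * (Real.log (gmmSurrogate Γ GK xs y)) ^ 2)
            ∂(Measure.pi fun _ : Fin M => μ)
          ≤ C := by
  set θ := min 1 (L₂ / L₁ ^ 2)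
  have hθ : 0 < θ := lt_min one_pos (by positivity)
  have hθL : θ * L₁ ^ 2 ≤ L₂ :=
    calc θ * L₁ ^ 2 ≤ L₂ / L₁ ^ 2 * L₁ ^ 2 := by gcongr; exact min_le_right _ _
      _ = L₂ := div_mul_cancel₀ _ (by positivity)
  set A := gaussNormConst Γ * exp (θ * (L₃ + L₁ * ‖x₀‖) ^ 2) * ∫ x, exp (L₂ * ‖x‖ ^ 2) ∂μ
  set Q : (Fin d → ℝ) → ℝ≥0∞ := fun y => ENNReal.ofReal (A * exp (-(θ / 4) * normGammaSq Γ y))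
  set K := ENNReal.ofReal (log (gaussNormConst Γ) ^ 2)
  refine ⟨(∫⁻ y, (16 * Q y ^ (1 / 2 : ℝ) + K * Q y)).toReal, fun G hG hLip hBd M hM => ?_⟩
  have hGx : ∀ x, normGamma Γ (G x) ≤ L₁ * ‖x‖ + (L₃ + L₁ * ‖x₀‖) :=
    normGamma_le_mul_norm_add_of_lipschitz hΓ_pd hL₁.le hLip (hBd x₀ (Metric.mem_ball_self hR)).le
  have hQ : ∀ y, gaussEvidence Γ G μ y ≤ Q y := fun y => by
    convert gaussEvidence_le_mul_exp hΓ_pd hSubGauss hGx hθ.le (min_le_left _ _) hθL y using 2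
    ring
  refine integral_integral_le_toReal_of_lintegral_le
    (lintegral_rpow_half_add_exp_neg_normGammaSq_lt_top hΓ_pd (by positivity) A (by finiteness)
      (by finiteness)).ne ?_
  calc _ ≤ ∫⁻ y, (16 * gaussEvidence Γ G μ y ^ (1 / 2 : ℝ) + K * gaussEvidence Γ G μ y) := by
        simpa only [lintegral_gmmSurrogate_pi μ hM.ne' hG] using
          lintegral_lintegral_enorm_mul_log_sq_le (ν := Measure.pi fun _ : Fin M => μ)
            (ρ := volume) (measurable_gmmSurrogate hG) (gmmSurrogate_nonneg G)
            (gmmSurrogate_le hΓ_pd G)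
    _ ≤ _ := lintegral_mono fun y => by gcongr <;> exact hQ y

/-- There is a finite constant `C`, depending only on the constants of
Assumption A, on `d`, `Γ` and `μ` (and independent of `M` and of the forward map), such that
for an i.i.d. sample `X₁, …, X_M ∼ μ` the Gaussian mixture surrogate satisfies
`E^{⊗μ}[∫ π_M^K(y) log²π_M^K(y) dy] ≤ C`. -/
theorem gmm_surrogate_squared_log_moment_uniform_bound {d : ℕ}
    {X : Type*} [NormedAddCommGroup X] [NormedSpace ℝ X] [CompleteSpace X]
    [TopologicalSpace.SeparableSpace X] [MeasurableSpace X] [BorelSpace X]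
    (μ : Measure X) [IsProbabilityMeasure μ]
    (Γ : Matrix (Fin d) (Fin d) ℝ) (hΓ_symm : Γ.IsSymm) (hΓ_pd : Γ.PosDef)
    (L₁ L₂ R L₃ : ℝ) (x₀ : X)
    (hL₁ : 0 < L₁) (hL₂ : 0 < L₂) (hR : 0 < R) (hL₃ : 0 < L₃)
    (hSubGauss : Integrable (fun x => Real.exp (L₂ * ‖x‖ ^ 2)) μ)
    (hBall : 0 < μ (Metric.ball x₀ R)) :
    ∃ C : ℝ, ∀ GK : X → (Fin d → ℝ),
      Measurable GK →
      (∀ x x' : X, normGamma Γ (GK x - GK x') ≤ L₁ * ‖x - x'‖) →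
      (∀ x ∈ Metric.ball x₀ R, normGamma Γ (GK x) < L₃) →
      ∀ M : ℕ, 0 < M →
        ∫ xs, (∫ y, gmmSurrogate Γ GK xs y * (Real.log (gmmSurrogate Γ GK xs y)) ^ 2)
            ∂(Measure.pi fun _ : Fin M => μ)
          ≤ C :=
  gmm_surrogate_squared_log_moment_uniform_bound_general μ Γ hΓ_pd L₁ L₂ R L₃ x₀ hL₁ hL₂ hR
    hSubGauss
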